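/- arXiv:1107.0894 — 2 statements merged into one kernel-verified Lean document; each statement's English description precedes it below -/
import Mathlib

section
/- In the abstract finite volume setting (finite cell set 𝓣 with measures |K| > 0, faces ℰ with measures |e| > 0 and distances d_e > 0, each interior face joining two distinct cells and each boundary face one cell), define the discrete Lagrangian 𝓛_h(u) = (1/2) Σ_{e∈ℰ} F_e(u)² |e| d_e − Σ_K f_K u_K |K|, where F_e(u) = (u_{K₂}−u_{K₁})/d_e for interior faces e = K₁|K₂ and F_e(u) = −u_K/d_e for boundary faces, and (f_K) is given. Then u is a critical point of 𝓛_h if and only if −(Δ_h u)_K = f_K for every cell K, where (Δ_h u)_K = (1/|K|) Σ_{e⊂∂K} F_{e,K}(u)|e| with the signed fluxes of the two-point scheme. Moreover this critical point is unique provided every cell can be connected to a boundary face through faces of the mesh (which guarantees strict convexity of the quadratic part). -/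
open Finset

/-- Two-point flux finite volume discrete Laplacian on an abstract mesh. -/
noncomputable def lapFV {𝒯 ℰi ℰb : Type*} [Fintype ℰi] [Fintype ℰb] [DecidableEq 𝒯]
    (mK : 𝒯 → ℝ) (c1 c2 : ℰi → 𝒯) (cb : ℰb → 𝒯)
    (meI dI : ℰi → ℝ) (meB dB : ℰb → ℝ) (u : 𝒯 → ℝ) (K : 𝒯) : ℝ :=
  (1 / mK K) *
    ((∑ e : ℰi, ((if c1 e = K then (u (c2 e) - u (c1 e)) / dI e * meI e else 0)
        + (if c2 e = K then (u (c1 e) - u (c2 e)) / dI e * meI e else 0)))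
      + ∑ e : ℰb, (if cb e = K then (-(u K) / dB e) * meB e else 0))

/-- Adjacency of cells through an interior face. -/
def adjFV {𝒯 ℰi : Type*} (c1 c2 : ℰi → 𝒯) (K K' : 𝒯) : Prop :=
  ∃ e : ℰi, (c1 e = K ∧ c2 e = K') ∨ (c1 e = K' ∧ c2 e = K)

/-!
Along a line `u + t • v` the Lagrangian is a quadratic polynomial in `t`. Summation by parts over
the faces turns its linear coefficient into `-∑ K, (|K| (Δ_h u)_K + f_K |K|) v_K`, which vanishes
for every `v` exactly when the scheme holds. For uniqueness, the Dirichlet form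
`∑_e |e| / d_e (jump of u across e)²` is definite: a `u` of zero energy is constant across
interior faces and vanishes on cells touching the boundary, so by connectivity it is zero. Hence
`u ↦ |K| (Δ_h u)_K` is an injective, and therefore bijective, endomorphism of `𝒯 → ℝ`.
-/

theorem hasDerivAt_quadratic (a b c : ℝ) :
    HasDerivAt (fun t : ℝ => a + t * b + t ^ 2 * c) b 0 := by
  simpa [add_assoc] using (((hasDerivAt_id (0 : ℝ)).mul_const b).add
    ((hasDerivAt_pow 2 (0 : ℝ)).mul_const c)).const_add a

theorem eq_of_reflTransGen_adjFV {𝒯 ℰi α : Type*} {c1 c2 : ℰi → 𝒯} {u : 𝒯 → α}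
    (hu : ∀ e, u (c1 e) = u (c2 e)) {K K' : 𝒯} (h : Relation.ReflTransGen (adjFV c1 c2) K K') :
    u K = u K' := by
  induction h with
  | refl => rfl
  | tail _ hadj ih =>
    obtain ⟨e, ⟨rfl, rfl⟩ | ⟨rfl, rfl⟩⟩ := hadj
    · exact ih.trans (hu e)
    · exact ih.trans (hu e).symm

section NetFlux

variable {𝒯 ℰi ℰb : Type*} [Fintype ℰi] [Fintype ℰb]
  (c1 c2 : ℰi → 𝒯) (cb : ℰb → 𝒯) (meI dI : ℰi → ℝ) (meB dB : ℰb → ℝ)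

noncomputable def fvDirichletForm (u v : 𝒯 → ℝ) : ℝ :=
  (∑ e : ℰi, (u (c2 e) - u (c1 e)) * (v (c2 e) - v (c1 e)) / dI e * meI e)
    + ∑ e : ℰb, u (cb e) * v (cb e) / dB e * meB e

noncomputable def fvEnergy (u : 𝒯 → ℝ) : ℝ :=
  (1 / 2) * ((∑ e : ℰi, ((u (c2 e) - u (c1 e)) / dI e) ^ 2 * meI e * dI e)
    + ∑ e : ℰb, (-(u (cb e)) / dB e) ^ 2 * meB e * dB e)

theorem fvEnergy_add_smul (hdI : ∀ e, dI e ≠ 0) (hdB : ∀ e, dB e ≠ 0)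
    (u v : 𝒯 → ℝ) (t : ℝ) :
    fvEnergy c1 c2 cb meI dI meB dB (u + t • v) = fvEnergy c1 c2 cb meI dI meB dB u
      + t * fvDirichletForm c1 c2 cb meI dI meB dB u v
      + t ^ 2 * fvEnergy c1 c2 cb meI dI meB dB v := by
  have hI : ∀ e, (((u + t • v) (c2 e) - (u + t • v) (c1 e)) / dI e) ^ 2 * meI e * dI e
      = ((u (c2 e) - u (c1 e)) / dI e) ^ 2 * meI e * dI e
        + 2 * t * ((u (c2 e) - u (c1 e)) * (v (c2 e) - v (c1 e)) / dI e * meI e)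
        + t ^ 2 * (((v (c2 e) - v (c1 e)) / dI e) ^ 2 * meI e * dI e) := fun e => by
    simp only [Pi.add_apply, Pi.smul_apply, smul_eq_mul]
    field_simp [hdI e]
    ring
  have hB : ∀ e, (-(u + t • v) (cb e) / dB e) ^ 2 * meB e * dB e
      = (-(u (cb e)) / dB e) ^ 2 * meB e * dB e
        + 2 * t * (u (cb e) * v (cb e) / dB e * meB e)
        + t ^ 2 * ((-(v (cb e)) / dB e) ^ 2 * meB e * dB e) := fun e => by
    simp only [Pi.add_apply, Pi.smul_apply, smul_eq_mul]
    field_simp [hdB e]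
    ring
  simp only [fvEnergy, fvDirichletForm, hI, hB, sum_add_distrib, ← mul_sum]
  ring

theorem flat_and_boundary_zero_of_fvDirichletForm_self_eq_zero
    (hmeI : ∀ e, 0 < meI e) (hdI : ∀ e, 0 < dI e) (hmeB : ∀ e, 0 < meB e) (hdB : ∀ e, 0 < dB e)
    {u : 𝒯 → ℝ}
    (h : fvDirichletForm c1 c2 cb meI dI meB dB u u = 0) :
    (∀ e, u (c1 e) = u (c2 e)) ∧ ∀ e, u (cb e) = 0 := by
  have hI : ∀ e, 0 ≤ (u (c2 e) - u (c1 e)) * (u (c2 e) - u (c1 e)) / dI e * meI e := fun e =>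
    mul_nonneg (div_nonneg (mul_self_nonneg _) (hdI e).le) (hmeI e).le
  have hB : ∀ e, 0 ≤ u (cb e) * u (cb e) / dB e * meB e := fun e =>
    mul_nonneg (div_nonneg (mul_self_nonneg _) (hdB e).le) (hmeB e).le
  obtain ⟨hI0, hB0⟩ :=
    (add_eq_zero_iff_of_nonneg (sum_nonneg fun e _ => hI e) (sum_nonneg fun e _ => hB e)).1 h
  rw [sum_eq_zero_iff_of_nonneg fun e _ => hI e] at hI0
  rw [sum_eq_zero_iff_of_nonneg fun e _ => hB e] at hB0
  refine ⟨fun e => ?_, fun e => ?_⟩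
  · simpa [(hdI e).ne', (hmeI e).ne', sub_eq_zero, eq_comm] using hI0 e (mem_univ e)
  · simpa [(hdB e).ne', (hmeB e).ne'] using hB0 e (mem_univ e)

variable [DecidableEq 𝒯]

/-- `∑_{e ⊂ ∂K} F_{e,K}(u) |e|`, that is `|K| (Δ_h u)_K`. -/
noncomputable def netFlux (u : 𝒯 → ℝ) (K : 𝒯) : ℝ :=
  (∑ e : ℰi, ((if c1 e = K then (u (c2 e) - u (c1 e)) / dI e * meI e else 0)
      + (if c2 e = K then (u (c1 e) - u (c2 e)) / dI e * meI e else 0)))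
    + ∑ e : ℰb, (if cb e = K then (-(u K) / dB e) * meB e else 0)

theorem neg_lapFV_eq_iff {mK : 𝒯 → ℝ} {K : 𝒯} (hK : mK K ≠ 0) (u : 𝒯 → ℝ) (y : ℝ) :
    -lapFV mK c1 c2 cb meI dI meB dB u K = y ↔
      netFlux c1 c2 cb meI dI meB dB u K + y * mK K = 0 := by
  change -(1 / mK K * netFlux c1 c2 cb meI dI meB dB u K) = y ↔ _
  rw [one_div_mul_eq_div, ← neg_div, div_eq_iff hK, neg_eq_iff_add_eq_zero, add_comm]

noncomputable def netFluxₗ : (𝒯 → ℝ) →ₗ[ℝ] (𝒯 → ℝ) where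
  toFun := netFlux c1 c2 cb meI dI meB dB
  map_add' u w := by
    ext K
    simp only [netFlux, Pi.add_apply, add_add_add_comm, ← sum_add_distrib]
    congr 1 <;> refine sum_congr rfl fun e _ => by split_ifs <;> ring
  map_smul' a u := by
    ext K
    simp only [netFlux, Pi.smul_apply, smul_eq_mul, RingHom.id_apply, mul_add, mul_sum]
    congr 1 <;> refine sum_congr rfl fun e _ => by split_ifs <;> ring

variable [Fintype 𝒯]

theorem fvDirichletForm_eq_neg_sum_netFlux_mul (u v : 𝒯 → ℝ) :
    fvDirichletForm c1 c2 cb meI dI meB dB u v =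
      -∑ K, netFlux c1 c2 cb meI dI meB dB u K * v K := by
  simp only [fvDirichletForm, netFlux, add_mul, sum_mul, ite_mul, zero_mul, sum_add_distrib,
    neg_add]
  simp only [sum_comm (γ := 𝒯)]
  simp only [← sum_add_distrib, ← sum_neg_distrib, sum_ite_eq, mem_univ, if_true]
  congr 1 <;> refine sum_congr rfl fun e _ => by ring

theorem netFluxₗ_bijective (hmeI : ∀ e, 0 < meI e) (hdI : ∀ e, 0 < dI e)
    (hmeB : ∀ e, 0 < meB e) (hdB : ∀ e, 0 < dB e)
    (hconn : ∀ K : 𝒯, ∃ K', Relation.ReflTransGen (adjFV c1 c2) K K' ∧ ∃ e, cb e = K') :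
    Function.Bijective (netFluxₗ c1 c2 cb meI dI meB dB) := by
  have hinj : Function.Injective (netFluxₗ c1 c2 cb meI dI meB dB) := by
    refine (injective_iff_map_eq_zero _).2 fun u hu => ?_
    have hu' : netFlux c1 c2 cb meI dI meB dB u = 0 := hu
    obtain ⟨hflat, hbdry⟩ := flat_and_boundary_zero_of_fvDirichletForm_self_eq_zero
      c1 c2 cb meI dI meB dB hmeI hdI hmeB hdB (u := u)
      (by simp [fvDirichletForm_eq_neg_sum_netFlux_mul, hu'])
    funext K
    obtain ⟨K', hKK', e, rfl⟩ := hconn K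
    exact (eq_of_reflTransGen_adjFV hflat hKK').trans (hbdry e)
  exact ⟨hinj, LinearMap.injective_iff_surjective.1 hinj⟩

theorem hasDerivAt_lagrangian (hdI : ∀ e, dI e ≠ 0) (hdB : ∀ e, dB e ≠ 0)
    (mK f u v : 𝒯 → ℝ) :
    HasDerivAt (fun t : ℝ => fvEnergy c1 c2 cb meI dI meB dB (u + t • v)
        - ∑ K, f K * (u + t • v) K * mK K)
      (-∑ K, (netFlux c1 c2 cb meI dI meB dB u K + f K * mK K) * v K) 0 := by
  have hlin : ∀ t : ℝ, ∑ K, f K * (u + t • v) K * mK K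
      = ∑ K, f K * u K * mK K + t * ∑ K, f K * v K * mK K := fun t => by
    simp only [mul_sum, ← sum_add_distrib, Pi.add_apply, Pi.smul_apply, smul_eq_mul]
    exact sum_congr rfl fun K _ => by ring
  convert hasDerivAt_quadratic
    (fvEnergy c1 c2 cb meI dI meB dB u - ∑ K, f K * u K * mK K)
    (fvDirichletForm c1 c2 cb meI dI meB dB u v - ∑ K, f K * v K * mK K)
    (fvEnergy c1 c2 cb meI dI meB dB v) using 1
  · funext t
    rw [fvEnergy_add_smul c1 c2 cb meI dI meB dB hdI hdB, hlin]
    ring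
  · simp only [fvDirichletForm_eq_neg_sum_netFlux_mul, add_mul, sum_add_distrib,
      mul_right_comm _ (mK _) (v _)]
    ring

end NetFlux

theorem finite_volume_coherence_general
    {𝒯 ℰi ℰb : Type*} [Fintype 𝒯] [Fintype ℰi] [Fintype ℰb] [DecidableEq 𝒯]
    (mK : 𝒯 → ℝ) (hmK : ∀ K, 0 < mK K)
    (c1 c2 : ℰi → 𝒯) (cb : ℰb → 𝒯)
    (meI : ℰi → ℝ) (hmeI : ∀ e, 0 < meI e) (dI : ℰi → ℝ) (hdI : ∀ e, 0 < dI e)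
    (meB : ℰb → ℝ) (hmeB : ∀ e, 0 < meB e) (dB : ℰb → ℝ) (hdB : ∀ e, 0 < dB e)
    (f : 𝒯 → ℝ)
    -- the discrete Lagrangian functional
    (Lh : (𝒯 → ℝ) → ℝ)
    (hLh : ∀ u, Lh u = (1 / 2) *
        ((∑ e : ℰi, ((u (c2 e) - u (c1 e)) / dI e) ^ 2 * meI e * dI e)
          + ∑ e : ℰb, (-(u (cb e)) / dB e) ^ 2 * meB e * dB e)
      - ∑ K : 𝒯, f K * u K * mK K)
    -- every cell is connected to a boundary face through faces of the mesh
    (hconn : ∀ K : 𝒯, ∃ K' : 𝒯,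
      Relation.ReflTransGen (adjFV c1 c2) K K' ∧ ∃ e : ℰb, cb e = K') :
    (∀ u : 𝒯 → ℝ,
        (∀ v : 𝒯 → ℝ, deriv (fun t : ℝ => Lh (u + t • v)) 0 = 0)
          ↔ (∀ K : 𝒯, -(lapFV mK c1 c2 cb meI dI meB dB u K) = f K)) ∧
    (∃! u : 𝒯 → ℝ, ∀ K : 𝒯, -(lapFV mK c1 c2 cb meI dI meB dB u K) = f K) := by
  have hderiv : ∀ u v, deriv (fun t : ℝ => Lh (u + t • v)) 0
      = -((fun K => netFlux c1 c2 cb meI dI meB dB u K + f K * mK K) ⬝ᵥ v) := fun u v => by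
    simp only [hLh]
    exact (hasDerivAt_lagrangian c1 c2 cb meI dI meB dB (fun e => (hdI e).ne')
      (fun e => (hdB e).ne') mK f u v).deriv
  have hsol : ∀ u, (∀ K, -(lapFV mK c1 c2 cb meI dI meB dB u K) = f K)
      ↔ netFlux c1 c2 cb meI dI meB dB u + (fun K => f K * mK K) = 0 := fun u => by
    simp only [funext_iff, Pi.add_apply, Pi.zero_apply,
      neg_lapFV_eq_iff c1 c2 cb meI dI meB dB (hmK _).ne']
  refine ⟨fun u => ?_, ?_⟩
  · simp only [hderiv, neg_eq_zero, dotProduct_eq_zero_iff, hsol]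
    rfl
  · simp only [hsol, add_eq_zero_iff_eq_neg]
    exact (netFluxₗ_bijective c1 c2 cb meI dI meB dB hmeI hdI hmeB hdB hconn).existsUnique _

theorem finite_volume_coherence
    {𝒯 ℰi ℰb : Type*} [Fintype 𝒯] [Fintype ℰi] [Fintype ℰb] [DecidableEq 𝒯]
    (mK : 𝒯 → ℝ) (hmK : ∀ K, 0 < mK K)
    (c1 c2 : ℰi → 𝒯) (hne : ∀ e, c1 e ≠ c2 e) (cb : ℰb → 𝒯)
    (meI : ℰi → ℝ) (hmeI : ∀ e, 0 < meI e) (dI : ℰi → ℝ) (hdI : ∀ e, 0 < dI e)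
    (meB : ℰb → ℝ) (hmeB : ∀ e, 0 < meB e) (dB : ℰb → ℝ) (hdB : ∀ e, 0 < dB e)
    (f : 𝒯 → ℝ)
    -- the discrete Lagrangian functional
    (Lh : (𝒯 → ℝ) → ℝ)
    (hLh : ∀ u, Lh u = (1 / 2) *
        ((∑ e : ℰi, ((u (c2 e) - u (c1 e)) / dI e) ^ 2 * meI e * dI e)
          + ∑ e : ℰb, (-(u (cb e)) / dB e) ^ 2 * meB e * dB e)
      - ∑ K : 𝒯, f K * u K * mK K)
    -- every cell is connected to a boundary face through faces of the mesh
    (hconn : ∀ K : 𝒯, ∃ K' : 𝒯,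
      Relation.ReflTransGen (adjFV c1 c2) K K' ∧ ∃ e : ℰb, cb e = K') :
    (∀ u : 𝒯 → ℝ,
        (∀ v : 𝒯 → ℝ, deriv (fun t : ℝ => Lh (u + t • v)) 0 = 0)
          ↔ (∀ K : 𝒯, -(lapFV mK c1 c2 cb meI dI meB dB u K) = f K)) ∧
    (∃! u : 𝒯 → ℝ, ∀ K : 𝒯, -(lapFV mK c1 c2 cb meI dI meB dB u K) = f K) :=
  finite_volume_coherence_general mK hmK c1 c2 cb meI hmeI dI hdI meB hmeB dB hdB f Lh hLh hconn
end

section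
/- Let M and W be finite-dimensional real inner product spaces with inner products [·,·]_M and [·,·]_W, let D : W → M be a surjective linear map (discrete divergence) and G = −D* : M → W its negative adjoint (discrete flux). Given f ∈ M, define the discrete Hamiltonian 𝓗_h(u,p) = [p, Gu]_W − (1/2)[p,p]_W − [u,f]_M on M × W. Then (u,p) is a critical point of 𝓗_h (i.e. its derivative vanishes in all directions (v,q) ∈ M × W) if and only if [D p, v]_M = −[f, v]_M for all v ∈ M and [p, q]_W + [u, D q]_M = 0 for all q ∈ W; moreover this system has a unique solution. -/
open scoped RealInnerProductSpace

theorem mimetic_hamiltonian_coherence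
    {M W : Type*}
    [NormedAddCommGroup M] [InnerProductSpace ℝ M] [FiniteDimensional ℝ M]
    [NormedAddCommGroup W] [InnerProductSpace ℝ W] [FiniteDimensional ℝ W]
    (D : W →ₗ[ℝ] M) (hD : Function.Surjective D)
    (G : M →ₗ[ℝ] W) (hG : G = -(LinearMap.adjoint D))
    (f : M)
    (Hh : M → W → ℝ)
    (hHh : ∀ u p, Hh u p = ⟪p, G u⟫ - (1 / 2) * ⟪p, p⟫ - ⟪u, f⟫) :
    (∀ (u : M) (p : W),
      (∀ (v : M) (q : W), deriv (fun t : ℝ => Hh (u + t • v) (p + t • q)) 0 = 0)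
        ↔ ((∀ v : M, ⟪D p, v⟫ = -⟪f, v⟫) ∧
           (∀ q : W, ⟪p, q⟫ + ⟪u, D q⟫ = 0))) ∧
    (∃! up : M × W,
      (∀ v : M, ⟪D up.2, v⟫ = -⟪f, v⟫) ∧
      (∀ q : W, ⟪up.2, q⟫ + ⟪up.1, D q⟫ = 0)) := by
  have hGv : ∀ (p : W) (v : M), ⟪p, G v⟫ = -⟪D p, v⟫ := by
    intro p v
    rw [hG]
    simp [LinearMap.adjoint_inner_right]
  have key : ∀ (u : M) (p : W) (v : M) (q : W),
      deriv (fun t : ℝ => Hh (u + t • v) (p + t • q)) 0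
        = ⟪q, G u⟫ + ⟪p, G v⟫ - ⟪p, q⟫ - ⟪v, f⟫ := by
    intro u p v q
    set A : ℝ := ⟪q, G v⟫ - (1/2) * ⟪q, q⟫ with hA
    set B : ℝ := ⟪q, G u⟫ + ⟪p, G v⟫ - ⟪p, q⟫ - ⟪v, f⟫ with hB
    set C : ℝ := ⟪p, G u⟫ - (1/2) * ⟪p, p⟫ - ⟪u, f⟫ with hC
    have hfun : (fun t : ℝ => Hh (u + t • v) (p + t • q))
        = fun t : ℝ => A * t ^ 2 + B * t + C := by
      funext t
      rw [hHh, hA, hB, hC]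
      simp only [map_add, map_smul, inner_add_left, inner_add_right,
        inner_smul_left, inner_smul_right, real_inner_comm p q,
        starRingEnd_apply, star_trivial]
      ring
    rw [hfun]
    have h1 : HasDerivAt (fun t : ℝ => A * t ^ 2 + B * t + C)
        (A * (2 * 0 ^ 1) + B * 1) 0 := by
      exact (((hasDerivAt_pow 2 (0:ℝ)).const_mul A).add
        ((hasDerivAt_id (0:ℝ)).const_mul B)).add_const C
    have := h1.deriv
    simpa using this
  constructor
  · intro u p
    constructor
    · intro h
      constructor
      · intro v
        have := h v 0
        rw [key] at this
        simp [hGv] at this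
        have hc := real_inner_comm f v
        linarith
      · intro q
        have := h 0 q
        rw [key] at this
        have hq : ⟪q, G u⟫ = -⟪D q, u⟫ := hGv q u
        simp [hq] at this
        have hc := real_inner_comm u (D q)
        linarith
    · rintro ⟨h1, h2⟩ v q
      rw [key]
      have e1 : ⟪p, G v⟫ = -⟪D p, v⟫ := hGv p v
      have e2 : ⟪q, G u⟫ = -⟪D q, u⟫ := hGv q u
      have e3 := h1 v
      have e4 := h2 q
      rw [e1, e2, e3]
      have hc1 := real_inner_comm f v
      have hc2 := real_inner_comm u (D q)
      linarith
  · -- uniqueness part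
    set T : M →ₗ[ℝ] M := D ∘ₗ LinearMap.adjoint D with hT
    have hTinj : Function.Injective T := by
      rw [← LinearMap.ker_eq_bot, LinearMap.ker_eq_bot']
      intro m hm
      have h0 : ⟪(LinearMap.adjoint D) m, (LinearMap.adjoint D) m⟫ = 0 := by
        rw [LinearMap.adjoint_inner_left]
        have : T m = 0 := hm
        simp [hT] at this
        simp [this]
      have hDm : (LinearMap.adjoint D) m = 0 := by
        exact inner_self_eq_zero.mp h0
      -- adjoint D injective since D surjective
      have : ∀ q : W, ⟪m, D q⟫ = 0 := by
        intro q
        rw [← LinearMap.adjoint_inner_left, hDm, inner_zero_left]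
      obtain ⟨q, hq⟩ := hD m
      have := this q
      rw [hq] at this
      exact inner_self_eq_zero.mp this
    have hTsurj : Function.Surjective T :=
      (LinearMap.injective_iff_surjective).mp hTinj
    obtain ⟨u, hu⟩ := hTsurj f
    refine ⟨(u, -(LinearMap.adjoint D) u), ⟨?_, ?_⟩, ?_⟩
    · intro v
      have : D ((LinearMap.adjoint D) u) = f := hu
      simp [this]
    · intro q
      simp [LinearMap.adjoint_inner_left, real_inner_comm]
    · rintro ⟨u', p'⟩ ⟨h1, h2⟩
      dsimp only at h1 h2
      have hp' : p' = -(LinearMap.adjoint D) u' := by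
        have : ∀ q : W, ⟪p' + (LinearMap.adjoint D) u', q⟫ = 0 := by
          intro q
          rw [inner_add_left, LinearMap.adjoint_inner_left]
          have := h2 q
          have hc := real_inner_comm u' (D q)
          linarith
        have h0 := this (p' + (LinearMap.adjoint D) u')
        have hz := inner_self_eq_zero.mp h0
        have : p' = -(LinearMap.adjoint D) u' := by
          have := hz
          linear_combination (norm := abel) this
        exact this
      have hDp' : D p' = -f := by
        have : ∀ v : M, ⟪D p' + f, v⟫ = 0 := by
          intro v
          rw [inner_add_left]
          have := h1 v
          have hc := real_inner_comm f v
          linarith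
        have h0 := this (D p' + f)
        have hz := inner_self_eq_zero.mp h0
        linear_combination (norm := abel) hz
      have hTu' : T u' = f := by
        have : D ((LinearMap.adjoint D) u') = f := by
          rw [hp'] at hDp'
          have := hDp'
          simp at this
          exact this
        simpa [hT] using this
      have huu : u' = u := hTinj (by rw [hTu', hu])
      have : p' = -(LinearMap.adjoint D) u := by rw [hp', huu]
      exact Prod.ext huu this
end
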